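/- Let c ≥ 0 and let ν be a (nonnegative Borel) measure on (0,1] with ∫_{(0,1]} y² ν(dy) < ∞ and ∫_{(0,1]} y ν(dy) < ∞. For f : ℝ → ℝ twice continuously differentiable on a neighborhood of [0,1], define Gf(x) = (c/2) x(1-x) f''(x) + ∫_{(0,1]} [ x (f(x+y(1-x)) - f(x)) + (1-x)(f(x(1-y)) - f(x)) ] ν(dy), define I⁰f(x) = c(1-x) f'(x) + ∫_{(0,1]} y [ f(x+y(1-x)) - f(x) ] ν(dy), and define I¹f(x) = (c/2) x(1-x) f''(x) + ∫_{(0,1]} (1-y) [ x (f(x+y(1-x)) - f(x)) + (1-x)(f(x(1-y)) - f(x)) ] ν(dy). Then, with H(x) = x, for every x ∈ (0,1], G(H·f)(x)/x = I⁰f(x) + I¹f(x). -/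

import Mathlib

/-! With `g z = z * f z` one has `g'' = 2 f' + z f''`, which accounts for the drift `c (1 - x) f'`
of `I⁰`, and the jump integrand of `G g` at `x` is, identically in `y`, `x` times the sum of the
integrands of `I⁰ f` and `I¹ f`. Splitting the integral needs both integrands to be integrable:
`f` is Lipschitz on `[0,1]`, so each is `O(y)`, and `y` is `ν`-integrable on `(0,1]`. -/

open MeasureTheory Set

/-- The Generalized Fleming–Viot generator (two types, no mutation):
`Gg(x) = (c/2)x(1-x)g''(x) + ∫ [x(g(x+y(1-x))-g(x)) + (1-x)(g(x(1-y))-g(x))] ν(dy)`. -/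
noncomputable def GFVgen (c : ℝ) (ν : Measure ℝ) (g : ℝ → ℝ) (x : ℝ) : ℝ :=
  c / 2 * (x * (1 - x)) * deriv (deriv g) x
    + ∫ y in Ioc (0 : ℝ) 1,
        (x * (g (x + y * (1 - x)) - g x) + (1 - x) * (g (x * (1 - y)) - g x)) ∂ν

/-- The immigration part `I⁰`. -/
noncomputable def GFV_I0 (c : ℝ) (ν : Measure ℝ) (f : ℝ → ℝ) (x : ℝ) : ℝ :=
  c * (1 - x) * deriv f x
    + ∫ y in Ioc (0 : ℝ) 1, y * (f (x + y * (1 - x)) - f x) ∂ν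

/-- The reproduction part `I¹`. -/
noncomputable def GFV_I1 (c : ℝ) (ν : Measure ℝ) (f : ℝ → ℝ) (x : ℝ) : ℝ :=
  c / 2 * (x * (1 - x)) * deriv (deriv f) x
    + ∫ y in Ioc (0 : ℝ) 1,
        (1 - y) *
          (x * (f (x + y * (1 - x)) - f x) + (1 - x) * (f (x * (1 - y)) - f x)) ∂ν

open Filter Topology unitInterval
open scoped NNReal

theorem deriv_deriv_id_mul {𝕜 : Type*} [NontriviallyNormedField 𝕜] {f : 𝕜 → 𝕜} {x : 𝕜}
    (hf : ContDiffAt 𝕜 2 f x) :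
    deriv (deriv fun z => z * f z) x = 2 * deriv f x + x * deriv (deriv f) x := by
  have hderiv : deriv (fun z => z * f z) =ᶠ[𝓝 x] fun z => f z + z * deriv f z := by
    filter_upwards [hf.eventually (by simp)] with z hz
    have h : HasDerivAt (fun z => z * f z) (1 * f z + z * deriv f z) z :=
      (hasDerivAt_id' z).mul (hz.differentiableAt two_ne_zero).hasDerivAt
    rw [h.deriv, one_mul]
  have hf' : DifferentiableAt 𝕜 (deriv f) x :=
    (hf.derivWithin (m := 1) (by norm_num)).differentiableAt one_ne_zero
  have h : HasDerivAt (fun z => f z + z * deriv f z)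
      (deriv f x + (1 * deriv f x + x * deriv (deriv f) x)) x :=
    (hf.differentiableAt two_ne_zero).hasDerivAt.add ((hasDerivAt_id' x).mul hf'.hasDerivAt)
  rw [hderiv.deriv_eq, h.deriv]
  ring

theorem integrableOn_of_continuousOn_of_abs_le_mul_id {ν : Measure ℝ} {s : Set ℝ} {g : ℝ → ℝ}
    {C : ℝ} (hs : MeasurableSet s) (hν : IntegrableOn (fun y => y) s ν)
    (hg : ContinuousOn g s) (hbound : ∀ y ∈ s, |g y| ≤ C * y) : IntegrableOn g s ν :=
  (hν.const_mul C).mono' (hg.aestronglyMeasurable hs) <| by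
    filter_upwards [ae_restrict_mem hs] with y hy using hbound y hy

section Jumps

variable {f : ℝ → ℝ} {K : ℝ≥0} {x y : ℝ}

theorem add_mul_one_sub_mem_unitInterval (hx : x ∈ I) (hy : y ∈ I) : x + y * (1 - x) ∈ I := by
  have h := mul_mem (Icc.mem_iff_one_sub_mem.mp hy) (Icc.mem_iff_one_sub_mem.mp hx)
  rw [Icc.mem_iff_one_sub_mem] at h
  convert h using 1
  ring

theorem mul_one_sub_mem_unitInterval (hx : x ∈ I) (hy : y ∈ I) : x * (1 - y) ∈ I :=
  mul_mem hx (Icc.mem_iff_one_sub_mem.mp hy)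

theorem LipschitzOnWith.abs_sub_le_of_abs_sub_le {s : Set ℝ} {p q r : ℝ}
    (hf : LipschitzOnWith K f s) (hp : p ∈ s) (hq : q ∈ s) (hpq : |p - q| ≤ r) :
    |f p - f q| ≤ K * r := by
  simpa only [Real.dist_eq] using
    (hf.dist_le_mul p hp q hq).trans (mul_le_mul_of_nonneg_left hpq K.coe_nonneg)

theorem abs_sub_add_mul_one_sub_le (hf : LipschitzOnWith K f I) (hx : x ∈ I) (hy : y ∈ I) :
    |f (x + y * (1 - x)) - f x| ≤ K * y :=
  hf.abs_sub_le_of_abs_sub_le (add_mul_one_sub_mem_unitInterval hx hy) hx <| by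
    rw [add_sub_cancel_left, abs_of_nonneg (mul_nonneg hy.1 (sub_nonneg.mpr hx.2))]
    exact mul_le_of_le_one_right hy.1 (sub_le_self _ hx.1)

theorem abs_sub_mul_one_sub_le (hf : LipschitzOnWith K f I) (hx : x ∈ I) (hy : y ∈ I) :
    |f (x * (1 - y)) - f x| ≤ K * y :=
  hf.abs_sub_le_of_abs_sub_le (mul_one_sub_mem_unitInterval hx hy) hx <| by
    rw [show x * (1 - y) - x = -(x * y) by ring, abs_neg, abs_of_nonneg (mul_nonneg hx.1 hy.1)]
    exact mul_le_of_le_one_left hy.1 hx.2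

theorem abs_immigration_integrand_le (hf : LipschitzOnWith K f I) (hx : x ∈ I) (hy : y ∈ I) :
    |y * (f (x + y * (1 - x)) - f x)| ≤ K * y := by
  rw [abs_mul, abs_of_nonneg hy.1]
  calc y * |f (x + y * (1 - x)) - f x| ≤ 1 * (K * y) :=
        mul_le_mul hy.2 (abs_sub_add_mul_one_sub_le hf hx hy) (abs_nonneg _) zero_le_one
    _ = K * y := one_mul _

theorem abs_reproduction_integrand_le (hf : LipschitzOnWith K f I) (hx : x ∈ I) (hy : y ∈ I) :
    |(1 - y) * (x * (f (x + y * (1 - x)) - f x) + (1 - x) * (f (x * (1 - y)) - f x))|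
      ≤ K * y := by
  have h1x : 0 ≤ 1 - x := sub_nonneg.mpr hx.2
  have hsum : |x * (f (x + y * (1 - x)) - f x) + (1 - x) * (f (x * (1 - y)) - f x)| ≤ K * y :=
    calc _ ≤ x * |f (x + y * (1 - x)) - f x| + (1 - x) * |f (x * (1 - y)) - f x| := by
          refine (abs_add_le _ _).trans_eq ?_
          rw [abs_mul, abs_mul, abs_of_nonneg hx.1, abs_of_nonneg h1x]
      _ ≤ x * (K * y) + (1 - x) * (K * y) := by
          gcongr
          exacts [hx.1, abs_sub_add_mul_one_sub_le hf hx hy, abs_sub_mul_one_sub_le hf hx hy]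
      _ = K * y := by ring
  rw [abs_mul, abs_of_nonneg (sub_nonneg.mpr hy.2)]
  calc (1 - y) * _ ≤ 1 * (K * y) :=
        mul_le_mul (sub_le_self _ hy.1) hsum (abs_nonneg _) zero_le_one
    _ = K * y := one_mul _

theorem continuousOn_immigration_integrand (hf : LipschitzOnWith K f I) (hx : x ∈ I) :
    ContinuousOn (fun y => y * (f (x + y * (1 - x)) - f x)) I :=
  continuousOn_id.mul <| (hf.continuousOn.comp (by fun_prop)
    fun _ hy => add_mul_one_sub_mem_unitInterval hx hy).sub continuousOn_const

theorem continuousOn_reproduction_integrand (hf : LipschitzOnWith K f I) (hx : x ∈ I) :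
    ContinuousOn (fun y =>
      (1 - y) * (x * (f (x + y * (1 - x)) - f x) + (1 - x) * (f (x * (1 - y)) - f x))) I :=
  (continuousOn_const.sub continuousOn_id).mul <|
    (continuousOn_const.mul <| (hf.continuousOn.comp (by fun_prop)
      fun _ hy => add_mul_one_sub_mem_unitInterval hx hy).sub continuousOn_const).add
    (continuousOn_const.mul <| (hf.continuousOn.comp (by fun_prop)
      fun _ hy => mul_one_sub_mem_unitInterval hx hy).sub continuousOn_const)

end Jumps

section Integrability

variable {ν : Measure ℝ} {f : ℝ → ℝ} {K : ℝ≥0} {x : ℝ}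

theorem integrableOn_immigration_integrand (hf : LipschitzOnWith K f I) (hx : x ∈ I)
    (hν : IntegrableOn (fun y => y) (Ioc 0 1) ν) :
    IntegrableOn (fun y => y * (f (x + y * (1 - x)) - f x)) (Ioc 0 1) ν :=
  integrableOn_of_continuousOn_of_abs_le_mul_id measurableSet_Ioc hν
    ((continuousOn_immigration_integrand hf hx).mono Ioc_subset_Icc_self)
    fun _ hy => abs_immigration_integrand_le hf hx (Ioc_subset_Icc_self hy)

theorem integrableOn_reproduction_integrand (hf : LipschitzOnWith K f I) (hx : x ∈ I)
    (hν : IntegrableOn (fun y => y) (Ioc 0 1) ν) :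
    IntegrableOn (fun y =>
      (1 - y) * (x * (f (x + y * (1 - x)) - f x) + (1 - x) * (f (x * (1 - y)) - f x)))
      (Ioc 0 1) ν :=
  integrableOn_of_continuousOn_of_abs_le_mul_id measurableSet_Ioc hν
    ((continuousOn_reproduction_integrand hf hx).mono Ioc_subset_Icc_self)
    fun _ hy => abs_reproduction_integrand_le hf hx (Ioc_subset_Icc_self hy)

end Integrability

theorem GFVgen_id_mul (c : ℝ) (ν : Measure ℝ) {f : ℝ → ℝ} {x : ℝ} (hf : ContDiffAt ℝ 2 f x)
    (h0 : IntegrableOn (fun y => y * (f (x + y * (1 - x)) - f x)) (Ioc 0 1) ν)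
    (h1 : IntegrableOn (fun y =>
      (1 - y) * (x * (f (x + y * (1 - x)) - f x) + (1 - x) * (f (x * (1 - y)) - f x)))
      (Ioc 0 1) ν) :
    GFVgen c ν (fun z => z * f z) x = x * (GFV_I0 c ν f x + GFV_I1 c ν f x) := by
  simp only [GFVgen, GFV_I0, GFV_I1, deriv_deriv_id_mul hf]
  rw [integral_congr_ae (g := fun y => x * (y * (f (x + y * (1 - x)) - f x) +
      (1 - y) * (x * (f (x + y * (1 - x)) - f x) + (1 - x) * (f (x * (1 - y)) - f x))))
      (ae_of_all _ fun y => by ring),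
    integral_const_mul, integral_add h0 h1]
  ring

theorem gfv_fixation_generator_decomposition_general
    (c : ℝ) (ν : Measure ℝ)
    (hν1 : IntegrableOn (fun y => y) (Ioc (0 : ℝ) 1) ν)
    (f : ℝ → ℝ) (U : Set ℝ) (hU : IsOpen U) (hUI : Icc (0 : ℝ) 1 ⊆ U)
    (hf : ContDiffOn ℝ 2 f U) :
    ∀ x ∈ Ioc (0 : ℝ) 1,
      GFVgen c ν (fun z => z * f z) x / x = GFV_I0 c ν f x + GFV_I1 c ν f x := by
  intro x hx
  have hxI : x ∈ I := Ioc_subset_Icc_self hx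
  obtain ⟨K, hK⟩ := (hf.mono hUI).exists_lipschitzOnWith two_ne_zero (convex_Icc 0 1) isCompact_Icc
  rw [GFVgen_id_mul c ν (hf.contDiffAt (hU.mem_nhds (hUI hxI)))
    (integrableOn_immigration_integrand hK hxI hν1)
    (integrableOn_reproduction_integrand hK hxI hν1), mul_div_cancel_left₀ _ hx.1.ne']

/-- Decomposition of the generator of the Generalized Fleming–Viot process conditioned on
fixation of type 1: with `H(x) = x` (and `r₁ = 0`), one has
`G(H·f)(x)/x = I⁰f(x) + I¹f(x)` for every `x ∈ (0,1]`. -/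
theorem gfv_fixation_generator_decomposition
    (c : ℝ) (hc : 0 ≤ c) (ν : Measure ℝ)
    (hν2 : IntegrableOn (fun y => y ^ 2) (Ioc (0 : ℝ) 1) ν)
    (hν1 : IntegrableOn (fun y => y) (Ioc (0 : ℝ) 1) ν)
    (f : ℝ → ℝ) (U : Set ℝ) (hU : IsOpen U) (hUI : Icc (0 : ℝ) 1 ⊆ U)
    (hf : ContDiffOn ℝ 2 f U) :
    ∀ x ∈ Ioc (0 : ℝ) 1,
      GFVgen c ν (fun z => z * f z) x / x = GFV_I0 c ν f x + GFV_I1 c ν f x :=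
  gfv_fixation_generator_decomposition_general c ν hν1 f U hU hUI hf
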